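/- arXiv:1812.02097 — 6 statements merged into one kernel-verified Lean document; each statement's English description precedes it below -/
import Mathlib

section
/- Let P be a finite poset on [n]. The origin is the unique interior lattice point of the enriched chain polytope E_P; that is, the only point of ℤ^n in the topological interior of E_P is 0. -/
/-- `A` is an antichain of the poset `(Fin n, r)`. -/
def IsAntichainIn {n : ℕ} (r : Fin n → Fin n → Prop) (A : Set (Fin n)) : Prop :=
  ∀ i ∈ A, ∀ j ∈ A, i ≠ j → ¬ r i j ∧ ¬ r j i

/-- The set `E(P)` of signed indicator vectors of antichains of `P`. -/
def signedAntichainVectors {n : ℕ} (r : Fin n → Fin n → Prop) : Set (Fin n → ℝ) :=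
  {x | (∀ i, x i = 0 ∨ x i = 1 ∨ x i = -1) ∧ IsAntichainIn r {i | x i ≠ 0}}

/-- The enriched chain polytope `E_P`. -/
def enrichedChainPolytope {n : ℕ} (r : Fin n → Fin n → Prop) : Set (Fin n → ℝ) :=
  convexHull ℝ (signedAntichainVectors r)

lemma abs_mul_sign' (x : ℝ) : |x| * Real.sign x = x := by
  rcases lt_trichotomy x 0 with h | rfl | h
  · rw [Real.sign_of_neg h, abs_of_neg h]; ring
  · simp
  · rw [Real.sign_of_pos h, abs_of_pos h]; ring

lemma l1_ball_subset {n : ℕ} (r : Fin n → Fin n → Prop) (x : Fin n → ℝ)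
    (hx : ∑ i, |x i| ≤ 1) : x ∈ enrichedChainPolytope r := by
  classical
  set w : Option (Fin n) → ℝ := fun o => o.elim (1 - ∑ i, |x i|) (fun i => |x i|) with hw
  set z : Option (Fin n) → (Fin n → ℝ) :=
    fun o => o.elim 0 (fun i => Pi.single i (Real.sign (x i))) with hz
  have hw0 : ∀ o ∈ (Finset.univ : Finset (Option (Fin n))), 0 ≤ w o := by
    rintro (_ | i) _
    · simpa [hw] using hx
    · simp [hw, abs_nonneg]
  have hwsum : ∑ o : Option (Fin n), w o = 1 := by
    rw [univ_option, Finset.sum_insertNone]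
    simp [hw]
  have hzs : ∀ o ∈ (Finset.univ : Finset (Option (Fin n))),
      z o ∈ signedAntichainVectors r := by
    rintro (_ | i) _
    · refine ⟨fun j => Or.inl rfl, ?_⟩
      intro a ha
      simp [hz] at ha
    · constructor
      · intro j
        rcases eq_or_ne j i with rfl | hji
        · have := Real.sign_apply_eq (x j)
          simp only [hz, Option.elim, Pi.single_eq_same]
          tauto
        · left; simp [hz, Pi.single_apply, hji]
      · intro a ha b hb hab
        exfalso
        apply hab
        simp only [hz, Set.mem_setOf_eq, ne_eq, Pi.single_apply] at ha hb
        by_contra _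
        rcases eq_or_ne a i with rfl | h1
        · rcases eq_or_ne b a with rfl | h2
          · exact hab rfl
          · exact hb (by simp [h2])
        · exact ha (by simp [h1])
  have hmem := Finset.centerMass_mem_convexHull (Finset.univ) hw0 (by rw [hwsum]; norm_num) hzs
  rw [Finset.centerMass_eq_of_sum_1 _ _ hwsum] at hmem
  have : ∑ o : Option (Fin n), w o • z o = x := by
    funext j
    rw [Finset.sum_apply]
    rw [univ_option, Finset.sum_insertNone]
    have : ∀ i : Fin n, (w (some i) • z (some i)) j
        = if i = j then |x i| * Real.sign (x i) else 0 := by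
      intro i
      simp only [hw, hz, Pi.smul_apply, Option.elim, smul_eq_mul, Pi.single_apply]
      by_cases h : j = i <;> simp [h, eq_comm]
    simp only [this]
    rw [Finset.sum_ite_eq' Finset.univ j (fun i => |x i| * Real.sign (x i))]
    simp [hw, hz, abs_mul_sign']
  rwa [this] at hmem

/-- The origin is the unique lattice point in the interior of the enriched chain polytope. -/
theorem enrichedChainPolytope_interior_lattice_points {n : ℕ} (r : Fin n → Fin n → Prop)
    (hr : IsPartialOrder (Fin n) r) :
    {x : Fin n → ℝ | x ∈ interior (enrichedChainPolytope r) ∧ ∀ i, ∃ z : ℤ, x i = z}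
      = {0} := by
  ext x
  simp only [Set.mem_setOf_eq, Set.mem_singleton_iff]
  constructor
  · rintro ⟨hxi, hxz⟩
    -- E_P ⊆ box
    have hbox : enrichedChainPolytope r ⊆ Set.pi Set.univ (fun _ => Set.Icc (-1 : ℝ) 1) := by
      apply convexHull_min
      · rintro y ⟨hy, -⟩ i -
        rcases hy i with h | h | h <;> rw [h] <;> norm_num
      · exact convex_pi fun i _ => convex_Icc _ _
    have h2 : x ∈ interior (Set.pi Set.univ (fun _ => Set.Icc (-1 : ℝ) 1)) :=
      interior_mono hbox hxi
    rw [interior_pi_set Set.finite_univ] at h2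
    funext i
    obtain ⟨zi, hzi⟩ := hxz i
    have := h2 i (Set.mem_univ i)
    rw [interior_Icc, hzi] at this
    have h1 : (-1 : ℝ) < (zi : ℝ) := this.1
    have h2' : (zi : ℝ) < 1 := this.2
    have hz1 : (-1 : ℤ) < zi := by exact_mod_cast h1
    have hz2 : zi < 1 := by exact_mod_cast h2'
    have : zi = 0 := by omega
    simp [hzi, this]
  · rintro rfl
    refine ⟨?_, fun i => ⟨0, by simp⟩⟩
    have hopen : IsOpen {y : Fin n → ℝ | ∑ i, |y i| < 1} := by
      apply isOpen_lt _ continuous_const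
      exact continuous_finset_sum _ fun i _ => (continuous_apply i).abs
    have hsub : {y : Fin n → ℝ | ∑ i, |y i| < 1} ⊆ enrichedChainPolytope r :=
      fun y hy => l1_ball_subset r y (le_of_lt hy)
    have h0 : (0 : Fin n → ℝ) ∈ {y : Fin n → ℝ | ∑ i, |y i| < 1} := by
      simp
    exact interior_maximal hsub hopen h0
end

section
/- Let P be a finite poset on [n] and let ε ∈ {−1,1}^n. Let O_ε = {x ∈ ℝ^n : ε_i x_i ≥ 0 for all i} be the corresponding closed orthant. Then the intersection E_P ∩ O_ε equals the convex hull of E(P) ∩ O_ε. -/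
/-- The closed orthant determined by a sign vector `ε`. -/
def orthant {n : ℕ} (ε : Fin n → ℝ) : Set (Fin n → ℝ) :=
  {x | ∀ i, 0 ≤ ε i * x i}

open Finset

lemma orthant_convex {n : ℕ} (ε : Fin n → ℝ) : Convex ℝ (orthant ε) := by
  intro x hx y hy a b ha hb hab i
  have hx' := hx i
  have hy' := hy i
  have : ε i * (a • x + b • y) i = a * (ε i * x i) + b * (ε i * y i) := by
    simp [Pi.add_apply, Pi.smul_apply, smul_eq_mul]; ring
  rw [this]
  positivity

lemma antichainIn_mono {n : ℕ} (r : Fin n → Fin n → Prop) {A B : Set (Fin n)}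
    (h : A ⊆ B) (hB : IsAntichainIn r B) : IsAntichainIn r A :=
  fun i hi j hj hij => hB i (h hi) j (h hj) hij

/-- Zeroing out a coordinate, as a linear map. -/
noncomputable def zeroCoord {n : ℕ} (i : Fin n) : (Fin n → ℝ) →ₗ[ℝ] (Fin n → ℝ) where
  toFun x := Function.update x i 0
  map_add' x y := by
    funext j
    by_cases h : j = i <;> simp [Function.update_apply, h]
  map_smul' c x := by
    funext j
    by_cases h : j = i <;> simp [Function.update_apply, h]

lemma zeroCoord_apply {n : ℕ} (i : Fin n) (x : Fin n → ℝ) :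
    zeroCoord i x = Function.update x i 0 := rfl

lemma update_zero_mem {n : ℕ} (r : Fin n → Fin n → Prop) {v : Fin n → ℝ}
    (hv : v ∈ signedAntichainVectors r) (i : Fin n) :
    Function.update v i 0 ∈ signedAntichainVectors r := by
  constructor
  · intro j
    by_cases h : j = i <;> simp [Function.update_apply, h, hv.1 j]
  · apply antichainIn_mono r _ hv.2
    intro j hj
    by_cases h : j = i <;> simp_all [Function.update_apply]

lemma update_zero_mem_inter {n : ℕ} (r : Fin n → Fin n → Prop) (ε : Fin n → ℝ)
    {v : Fin n → ℝ} (hv : v ∈ signedAntichainVectors r ∩ orthant ε) (i : Fin n) :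
    Function.update v i 0 ∈ signedAntichainVectors r ∩ orthant ε := by
  refine ⟨update_zero_mem r hv.1 i, fun j => ?_⟩
  by_cases h : j = i <;> simp [Function.update_apply, h, hv.2 j]

/-- One-coordinate down-closure of the hull. -/
lemma update_mem_hull {n : ℕ} (r : Fin n → Fin n → Prop) (ε : Fin n → ℝ)
    (hε : ∀ i, ε i = 1 ∨ ε i = -1) {u : Fin n → ℝ}
    (hu : u ∈ convexHull ℝ (signedAntichainVectors r ∩ orthant ε))
    (i : Fin n) (c : ℝ) (h0 : 0 ≤ ε i * c) (h1 : ε i * c ≤ ε i * u i) :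
    Function.update u i c ∈ convexHull ℝ (signedAntichainVectors r ∩ orthant ε) := by
  have hεne : ε i ≠ 0 := by rcases hε i with h | h <;> rw [h] <;> norm_num
  have hconv : Convex ℝ (convexHull ℝ (signedAntichainVectors r ∩ orthant ε)) :=
    convex_convexHull ℝ _
  -- the zeroed point is in the hull
  have hz : Function.update u i 0 ∈ convexHull ℝ (signedAntichainVectors r ∩ orthant ε) := by
    rw [← zeroCoord_apply]
    have := (zeroCoord i).image_convexHull (signedAntichainVectors r ∩ orthant ε)
    have hmem : zeroCoord i u ∈ (zeroCoord i) '' (convexHull ℝ (signedAntichainVectors r ∩ orthant ε)) :=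
      Set.mem_image_of_mem _ hu
    rw [this] at hmem
    refine convexHull_mono ?_ hmem
    rintro x ⟨y, hy, rfl⟩
    exact update_zero_mem_inter r ε hy i
  by_cases hui : u i = 0
  · have : ε i * c = 0 := le_antisymm (by rw [hui, mul_zero] at h1; exact h1) h0
    have hc : c = 0 := by
      rcases mul_eq_zero.1 this with h | h
      · exact absurd h hεne
      · exact h
    rw [hc]; exact hz
  · have hεu : 0 < ε i * u i := by
      have hne : ε i * u i ≠ 0 := mul_ne_zero hεne hui
      exact lt_of_le_of_ne (le_trans h0 h1) (Ne.symm hne)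
    set lam : ℝ := (ε i * c) / (ε i * u i) with hlam
    have hl0 : 0 ≤ lam := div_nonneg h0 hεu.le
    have hl1 : lam ≤ 1 := (div_le_one hεu).2 h1
    have key : Function.update u i c = lam • u + (1 - lam) • Function.update u i 0 := by
      funext j
      by_cases h : j = i
      · subst h
        simp only [Function.update_self, Pi.add_apply, Pi.smul_apply, smul_eq_mul,
          Function.update_self, mul_zero, add_zero]
        rw [hlam]
        field_simp
      · simp [Function.update_apply, h]
        ring
    rw [key]
    exact hconv hu hz hl0 (by linarith) (by ring)

/-- Down-closure of the hull within the orthant. -/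
lemma down_closed {n : ℕ} (r : Fin n → Fin n → Prop) (ε : Fin n → ℝ)
    (hε : ∀ i, ε i = 1 ∨ ε i = -1) (D : Finset (Fin n)) :
    ∀ u y : Fin n → ℝ, u ∈ convexHull ℝ (signedAntichainVectors r ∩ orthant ε) →
    (∀ i, 0 ≤ ε i * y i) → (∀ i, ε i * y i ≤ ε i * u i) →
    (∀ i, y i ≠ u i → i ∈ D) →
    y ∈ convexHull ℝ (signedAntichainVectors r ∩ orthant ε) := by
  classical
  induction D using Finset.induction_on with
  | empty =>
    intro u y hu _ _ hD
    have : y = u := by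
      funext i
      by_contra h
      exact absurd (hD i h) (Finset.notMem_empty i)
    rw [this]; exact hu
  | @insert a D2 ha ih =>
    
    intro u y hu hy hle hD
    have hu' : Function.update u a (y a) ∈ convexHull ℝ (signedAntichainVectors r ∩ orthant ε) :=
      update_mem_hull r ε hε hu a (y a) (hy a) (hle a)
    refine ih (Function.update u a (y a)) y hu' hy ?_ ?_
    · intro i
      by_cases h : i = a
      · subst h; simp
      · simp only [Function.update_apply, if_neg h]
        exact hle i
    · intro i hi
      by_cases h : i = a
      · exfalso; subst h; simp at hi
      · have : y i ≠ u i := by simpa [Function.update_apply, h] using hi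
        rcases Finset.mem_insert.1 (hD i this) with h' | h'
        · exact absurd h' h
        · exact h'

/-- `E_P ∩ O_ε` equals the convex hull of `E(P) ∩ O_ε`. -/
theorem enrichedChainPolytope_inter_orthant {n : ℕ} (r : Fin n → Fin n → Prop)
    (hr : IsPartialOrder (Fin n) r) (ε : Fin n → ℝ) (hε : ∀ i, ε i = 1 ∨ ε i = -1) :
    enrichedChainPolytope r ∩ orthant ε
      = convexHull ℝ (signedAntichainVectors r ∩ orthant ε) := by
  classical
  apply Set.Subset.antisymm
  · rintro x ⟨hx, hxO⟩
    rw [enrichedChainPolytope, _root_.convexHull_eq] at hx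
    obtain ⟨ι, t, w, z, hw0, hw1, hzS, hcm⟩ := hx
    -- truncated vectors
    set zp : ι → (Fin n → ℝ) := fun j i => if ε i * z j i < 0 then 0 else z j i with hzp
    have hzpS : ∀ j ∈ t, zp j ∈ signedAntichainVectors r ∩ orthant ε := by
      intro j hj
      refine ⟨⟨fun i => ?_, ?_⟩, fun i => ?_⟩
      · by_cases h : ε i * z j i < 0 <;> simp [hzp, h, (hzS j hj).1 i]
      · refine antichainIn_mono r ?_ (hzS j hj).2
        intro i hi
        simp only [Set.mem_setOf_eq, hzp] at hi ⊢
        by_cases h : ε i * z j i < 0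
        · simp [h] at hi
        · simpa [h] using hi
      · by_cases h : ε i * z j i < 0 <;> simp [hzp, h]
        exact le_of_not_gt h
    have hxeq : x = ∑ j ∈ t, w j • z j := by
      rw [← hcm, Finset.centerMass_eq_of_sum_1 _ _ hw1]
    set u : Fin n → ℝ := ∑ j ∈ t, w j • zp j with hu
    have huhull : u ∈ convexHull ℝ (signedAntichainVectors r ∩ orthant ε) := by
      have := Finset.centerMass_mem_convexHull t hw0 (by rw [hw1]; norm_num) hzpS
      rwa [Finset.centerMass_eq_of_sum_1 _ _ hw1] at this
    have hle : ∀ i, ε i * x i ≤ ε i * u i := by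
      intro i
      have hx_i : x i = ∑ j ∈ t, w j * z j i := by
        rw [hxeq]; simp [Finset.sum_apply]
      have hu_i : u i = ∑ j ∈ t, w j * zp j i := by
        rw [hu]; simp [Finset.sum_apply]
      rw [hx_i, hu_i, Finset.mul_sum, Finset.mul_sum]
      apply Finset.sum_le_sum
      intro j hj
      have h1 : ε i * z j i ≤ ε i * zp j i := by
        by_cases h : ε i * z j i < 0
        · simp [hzp, h]; linarith
        · simp [hzp, h]
      calc ε i * (w j * z j i) = w j * (ε i * z j i) := by ring
        _ ≤ w j * (ε i * zp j i) := mul_le_mul_of_nonneg_left h1 (hw0 j hj)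
        _ = ε i * (w j * zp j i) := by ring
    exact down_closed r ε hε Finset.univ u x huhull hxO hle (fun i _ => Finset.mem_univ i)
  · apply Set.subset_inter
    · exact convexHull_mono Set.inter_subset_left
    · exact convexHull_min Set.inter_subset_right (orthant_convex ε)
end

section
/- Let P be a finite poset on [n] and ε ∈ {−1,1}^n. The intersection E_P ∩ O_ε of the enriched chain polytope with the closed orthant O_ε is unimodularly equivalent to the chain polytope C_P of P; explicitly, the linear map x ↦ (ε_1 x_1, ..., ε_n x_n) maps C_P bijectively onto E_P ∩ O_ε. -/
/-- The chain polytope `C_P`: the convex hull of indicator vectors of antichains. -/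
def chainPolytope {n : ℕ} (r : Fin n → Fin n → Prop) : Set (Fin n → ℝ) :=
  convexHull ℝ {x | (∀ i, x i = 0 ∨ x i = 1) ∧ IsAntichainIn r {i | x i ≠ 0}}

/-!
Coordinatewise multiplication by `ε` is an involution, so it suffices that it maps `C_P` into
`E_P ∩ O_ε` and back. Forwards, `ε` turns antichain indicator vectors into signed ones and
keeps the nonnegative vector `x` in `O_ε`. Backwards, taking absolute values in a convex
combination of signed antichain vectors shows that every `y ∈ E_P` satisfies `|y| ≤ z` for
some `z ∈ C_P`; for `y ∈ O_ε` this gives `0 ≤ ε y ≤ z`, and `C_P` is a down-set of the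
nonnegative orthant because its vertex set is closed under zeroing coordinates.
-/

section Coordinatewise

variable {ι : Type*}

theorem Set.MapsTo.convexHull_mul {S T : Set (ι → ℝ)} {c : ι → ℝ}
    (h : Set.MapsTo (c * ·) S T) : Set.MapsTo (c * ·) (convexHull ℝ S) (convexHull ℝ T) :=
  fun _ hx => convexHull_mono h.image_subset <|
    (LinearMap.mulLeft ℝ c).image_convexHull S ▸ Set.mem_image_of_mem _ hx

theorem Icc_zero_one_eq_convexHull [Finite ι] :
    Set.Icc (0 : ι → ℝ) 1 = convexHull ℝ (Set.univ.pi fun _ => {0, 1}) := by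
  rw [convexHull_pi, ← Set.pi_univ_Icc]
  simp only [Pi.zero_apply, Pi.one_apply, convexHull_pair, segment_eq_Icc zero_le_one]

/-- A convex hull of a set stable under masking coordinates is stable under scaling them
by factors in `[0, 1]`: the factors `c` that work form a convex set containing the `0/1`-vectors. -/
theorem mul_mem_convexHull_of_mem_Icc [Finite ι] {S : Set (ι → ℝ)}
    (hS : ∀ m ∈ Set.univ.pi (fun _ => ({0, 1} : Set ℝ)), Set.MapsTo (m * ·) S S)
    {x : ι → ℝ} (hx : x ∈ convexHull ℝ S) {c : ι → ℝ} (hc : c ∈ Set.Icc 0 1) :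
    c * x ∈ convexHull ℝ S := by
  have hconv : Convex ℝ {c : ι → ℝ | c * x ∈ convexHull ℝ S} :=
    (convex_convexHull ℝ S).linear_preimage (LinearMap.mulRight ℝ x)
  rw [Icc_zero_one_eq_convexHull] at hc
  exact convexHull_min (fun m hm => (hS m hm).convexHull_mul hx) hconv hc

theorem mem_convexHull_of_nonneg_of_le [Finite ι] {S : Set (ι → ℝ)}
    (hS : ∀ m ∈ Set.univ.pi (fun _ => ({0, 1} : Set ℝ)), Set.MapsTo (m * ·) S S)
    {y z : ι → ℝ} (hz : z ∈ convexHull ℝ S) (hy : 0 ≤ y) (hyz : y ≤ z) :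
    y ∈ convexHull ℝ S := by
  have hz0 : 0 ≤ z := hy.trans hyz
  have hc : y / z ∈ Set.Icc 0 1 :=
    ⟨fun i => div_nonneg (hy i) (hz0 i), fun i => div_le_one_of_le₀ (hyz i) (hz0 i)⟩
  have hyc : y = y / z * z := by
    ext i
    rcases eq_or_ne (z i) 0 with h | h
    · -- `y i / 0 = 0`, and `y i = 0` is squeezed between `0` and `z i = 0`
      simp [h, le_antisymm ((hyz i).trans_eq h) (hy i)]
    · simp [h]
  rw [hyc]
  exact mul_mem_convexHull_of_mem_Icc hS hz hc

theorem exists_abs_le_of_mem_convexHull {T : Set (ι → ℝ)} {y : ι → ℝ}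
    (hy : y ∈ convexHull ℝ T) : ∃ z ∈ convexHull ℝ ((|·|) '' T), |y| ≤ z := by
  refine convexHull_min (t := {y | ∃ z ∈ convexHull ℝ ((|·|) '' T), |y| ≤ z})
    (fun v hv => ⟨|v|, subset_convexHull ℝ _ ⟨v, hv, rfl⟩, le_rfl⟩) ?_ hy
  rintro y₁ ⟨z₁, hz₁, h₁⟩ y₂ ⟨z₂, hz₂, h₂⟩ a b ha hb hab
  refine ⟨a • z₁ + b • z₂, convex_convexHull ℝ _ hz₁ hz₂ ha hb hab, ?_⟩
  calc |a • y₁ + b • y₂| ≤ |a • y₁| + |b • y₂| := abs_add_le _ _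
    _ = a • |y₁| + b • |y₂| := by
      ext i
      simp only [Pi.add_apply, Pi.smul_apply, Pi.abs_apply, abs_smul, abs_of_nonneg ha,
        abs_of_nonneg hb]
    _ ≤ a • z₁ + b • z₂ := by gcongr

end Coordinatewise

section Antichains

variable {n : ℕ} {r : Fin n → Fin n → Prop}

def antichainVectors (r : Fin n → Fin n → Prop) : Set (Fin n → ℝ) :=
  {x | (∀ i, x i = 0 ∨ x i = 1) ∧ IsAntichainIn r {i | x i ≠ 0}}

theorem IsAntichainIn.mono {A B : Set (Fin n)} (h : IsAntichainIn r A) (hBA : B ⊆ A) :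
    IsAntichainIn r B :=
  fun i hi j hj hij => h i (hBA hi) j (hBA hj) hij

theorem IsAntichainIn.support_mul {x : Fin n → ℝ} (h : IsAntichainIn r {i | x i ≠ 0})
    (m : Fin n → ℝ) : IsAntichainIn r {i | (m * x) i ≠ 0} :=
  h.mono fun _ => right_ne_zero_of_mul

theorem mapsTo_mul_antichainVectors {m : Fin n → ℝ}
    (hm : m ∈ Set.univ.pi fun _ => ({0, 1} : Set ℝ)) :
    Set.MapsTo (m * ·) (antichainVectors r) (antichainVectors r) := by
  rintro x ⟨hx, hxA⟩
  refine ⟨fun i => ?_, hxA.support_mul m⟩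
  obtain h | h : m i = 0 ∨ m i = 1 := hm i trivial <;> rcases hx i with h' | h' <;> simp [h, h']

theorem mapsTo_mul_signedAntichainVectors {ε : Fin n → ℝ} (hε : ∀ i, ε i = 1 ∨ ε i = -1) :
    Set.MapsTo (ε * ·) (antichainVectors r) (signedAntichainVectors r) := by
  rintro x ⟨hx, hxA⟩
  refine ⟨fun i => ?_, hxA.support_mul ε⟩
  rcases hε i with h | h <;> rcases hx i with h' | h' <;> simp [h, h']

theorem abs_image_signedAntichainVectors_subset :
    (|·|) '' signedAntichainVectors r ⊆ antichainVectors r := by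
  rintro _ ⟨x, ⟨hx, hxA⟩, rfl⟩
  refine ⟨fun i => ?_, by simpa only [Pi.abs_apply, ne_eq, abs_eq_zero] using hxA⟩
  rcases hx i with h | h | h <;> simp [h]

theorem chainPolytope_nonneg {x : Fin n → ℝ} (hx : x ∈ chainPolytope r) : 0 ≤ x :=
  convexHull_min (fun v hv i => by rcases hv.1 i with h | h <;> simp [h]) (convex_Ici 0) hx

end Antichains

theorem enrichedChainPolytope_inter_orthant_unimodular_general {n : ℕ} (r : Fin n → Fin n → Prop)
    (ε : Fin n → ℝ) (hε : ∀ i, ε i = 1 ∨ ε i = -1) :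
    Set.BijOn (fun x i => ε i * x i) (chainPolytope r)
      (enrichedChainPolytope r ∩ orthant ε) := by
  have hεε (x : Fin n → ℝ) : (fun i => ε i * (ε i * x i)) = x :=
    funext fun i => by rcases hε i with h | h <;> simp [h]
  refine Set.InvOn.bijOn (f' := fun x i => ε i * x i) ⟨fun x _ => hεε x, fun x _ => hεε x⟩
    ?_ ?_
  · intro x hx
    refine ⟨(mapsTo_mul_signedAntichainVectors hε).convexHull_mul hx, fun i => ?_⟩
    rw [congrFun (hεε x) i]
    exact chainPolytope_nonneg hx i
  · rintro y ⟨hyE, hyO⟩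
    obtain ⟨z, hz, hyz⟩ := exists_abs_le_of_mem_convexHull hyE
    refine mem_convexHull_of_nonneg_of_le (fun m hm => mapsTo_mul_antichainVectors hm)
      (convexHull_mono abs_image_signedAntichainVectors_subset hz) hyO fun i => ?_
    calc ε i * y i ≤ |ε i * y i| := le_abs_self _
      _ = |y i| := by rcases hε i with h | h <;> simp [h]
      _ ≤ z i := hyz i

/-- The linear map `x ↦ (ε_1 x_1, …, ε_n x_n)` maps the chain polytope `C_P`
bijectively onto `E_P ∩ O_ε`; in particular the two are unimodularly equivalent. -/
theorem enrichedChainPolytope_inter_orthant_unimodular {n : ℕ} (r : Fin n → Fin n → Prop)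
    (hr : IsPartialOrder (Fin n) r) (ε : Fin n → ℝ) (hε : ∀ i, ε i = 1 ∨ ε i = -1) :
    Set.BijOn (fun x i => ε i * x i) (chainPolytope r)
      (enrichedChainPolytope r ∩ orthant ε) :=
  enrichedChainPolytope_inter_orthant_unimodular_general r ε hε
end

section
/- Let P be a finite poset on [n]. The enriched chain polytope E_P is a reflexive polytope: it is an n-dimensional lattice polytope containing the origin as its unique interior lattice point, and its dual polytope E_P^∨ = {y ∈ ℝ^n : ⟨x,y⟩ ≤ 1 for all x ∈ E_P} is also a lattice polytope. -/
/-- The dual (polar) body of a subset of `ℝ^n`. -/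
def dualBody {n : ℕ} (S : Set (Fin n → ℝ)) : Set (Fin n → ℝ) :=
  {y | ∀ x ∈ S, (∑ i, x i * y i) ≤ 1}

/-!
A chain and an antichain share at most one element; conversely, peeling off signed indicators of
the minimal elements of the support, as in the proof of Mirsky's theorem, writes every `x` whose
chain sums `∑_{i ∈ C} |x i|` are at most `1` as a point of `E_P`. Hence `E_P` is the polar of the
finite set `V` of signed chain vectors, which contains `0` and has coordinates in `{0, ±1}`.
Then `0` is interior to `E_P`, `E_P` lies in the cube `[-1, 1]ⁿ` so no other lattice point is
interior, and by the bipolar theorem the dual of `E_P` is the convex hull of `V`, a set of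
lattice points of the dual.
-/

open Finset
open scoped Pointwise

section Order

variable {α : Type*} {r : α → α → Prop} [Finite α] [IsPartialOrder α r]

theorem exists_minimal_rel_of_mem {S : Set α} {i : α} (hi : i ∈ S) :
    ∃ a ∈ S, r a i ∧ ∀ b ∈ S, r b a → b = a := by
  have hwf : WellFounded fun a b => r a b ∧ a ≠ b := by
    have : IsTrans α fun a b => r a b ∧ a ≠ b := ⟨fun a b c hab hbc =>
      ⟨_root_.trans hab.1 hbc.1, fun hac => hab.2 (antisymm hab.1 (hac ▸ hbc.1))⟩⟩
    have : Std.Irrefl fun a b : α => r a b ∧ a ≠ b := ⟨fun _ h => h.2 rfl⟩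
    exact Finite.wellFounded_of_trans_of_irrefl _
  obtain ⟨a, ⟨haS, hai⟩, hmin⟩ := hwf.has_min {b | b ∈ S ∧ r b i} ⟨i, hi, refl i⟩
  exact ⟨a, haS, hai, fun b hbS hba =>
    by_contra fun hne => hmin b ⟨hbS, _root_.trans hba hai⟩ ⟨hba, hne⟩⟩

theorem IsChain.exists_forall_rel {C : Set α} (hC : IsChain r C) (hne : C.Nonempty) :
    ∃ m ∈ C, ∀ b ∈ C, r m b := by
  obtain ⟨c, hc⟩ := hne
  obtain ⟨m, hmC, -, hmin⟩ := exists_minimal_rel_of_mem (r := r) hc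
  refine ⟨m, hmC, fun b hb => ?_⟩
  rcases eq_or_ne m b with rfl | hmb
  · exact refl m
  · exact (hC hmC hb hmb).resolve_right fun hbm => hmb (hmin b hb hbm).symm

theorem IsChain.exists_minimal_insert {S C : Set α} (hC : IsChain r C) (hCS : C ⊆ S)
    (hS : S.Nonempty) : ∃ a ∈ S, (∀ b ∈ S, r b a → b = a) ∧ IsChain r (insert a C) := by
  obtain ⟨m, hmS, hm⟩ : ∃ m ∈ S, ∀ b ∈ C, r m b := by
    rcases C.eq_empty_or_nonempty with rfl | hCne
    · exact ⟨hS.some, hS.some_mem, by simp⟩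
    · obtain ⟨m, hmC, hm⟩ := hC.exists_forall_rel hCne
      exact ⟨m, hCS hmC, hm⟩
  obtain ⟨a, haS, ham, hmin⟩ := exists_minimal_rel_of_mem (r := r) hmS
  exact ⟨a, haS, hmin, hC.insert fun b hb _ => Or.inl (_root_.trans ham (hm b hb))⟩

end Order

section DualBody

variable {n : ℕ}

theorem subset_dualBody_comm {S T : Set (Fin n → ℝ)} : S ⊆ dualBody T ↔ T ⊆ dualBody S := by
  constructor <;> exact fun h x hx y hy => by simpa only [mul_comm] using h hy x hx

theorem subset_dualBody_dualBody (S : Set (Fin n → ℝ)) : S ⊆ dualBody (dualBody S) :=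
  subset_dualBody_comm.1 subset_rfl

theorem convex_dualBody (S : Set (Fin n → ℝ)) : Convex ℝ (dualBody S) := by
  have hS : dualBody S = ⋂ x ∈ S, {y : Fin n → ℝ | ∑ i, x i * y i ≤ 1} := by
    ext y; simp [dualBody]
  rw [hS]
  refine convex_iInter₂ fun x _ => convex_halfSpace_le ⟨fun y z => ?_, fun c y => ?_⟩ 1
  · simp only [Pi.add_apply, mul_add, sum_add_distrib]
  · simp only [Pi.smul_apply, smul_eq_mul, mul_left_comm, ← mul_sum]

theorem dualBody_convexHull (S : Set (Fin n → ℝ)) : dualBody (convexHull ℝ S) = dualBody S := by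
  ext y
  simp only [← Set.singleton_subset_iff (a := y), subset_dualBody_comm (S := {y})]
  exact ⟨(subset_convexHull ℝ S).trans, fun h => convexHull_min h (convex_dualBody _)⟩

theorem dualBody_dualBody_subset {K : Set (Fin n → ℝ)} (hK : Convex ℝ K) (hKc : IsClosed K)
    (h0 : 0 ∈ K) : dualBody (dualBody K) ⊆ K := by
  intro y hy
  by_contra hyK
  obtain ⟨f, u, hfK, hfy⟩ := geometric_hahn_banach_closed_point hK hKc hyK
  have hu : 0 < u := by simpa using hfK 0 h0
  set w : Fin n → ℝ := fun i => f (fun j => if i = j then 1 else 0) / u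
  have hfw : ∀ x, ∑ i, x i * w i = f x / u := fun x => by
    rw [show f x = f.toLinearMap x from rfl, LinearMap.pi_apply_eq_sum_univ, sum_div]
    simp only [w, smul_eq_mul, mul_div_assoc, ContinuousLinearMap.coe_coe]
  have hw : w ∈ dualBody K := fun x hx => by
    rw [hfw, div_le_one hu]; exact (hfK x hx).le
  have := hy w hw
  rw [show ∑ i, w i * y i = ∑ i, y i * w i by simp only [mul_comm], hfw, div_le_one hu] at this
  linarith

theorem zero_mem_interior_dualBody {S : Set (Fin n → ℝ)} (hS : ∀ v ∈ S, ∀ i, |v i| ≤ 1) :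
    (0 : Fin n → ℝ) ∈ interior (dualBody S) := by
  refine mem_interior.2 ⟨{x | ∑ i, |x i| < 1}, fun x hx v hv => ?_,
    isOpen_lt (by fun_prop) continuous_const, by simp⟩
  calc ∑ i, v i * x i ≤ ∑ i, |x i| := sum_le_sum fun i _ =>
        (le_abs_self _).trans <| by
          rw [abs_mul]; exact mul_le_of_le_one_left (abs_nonneg _) (hS v hv i)
    _ ≤ 1 := le_of_lt hx

end DualBody

section EnrichedChainPolytope

variable {n : ℕ} {r : Fin n → Fin n → Prop}

def signedChainVectors (r : Fin n → Fin n → Prop) : Set (Fin n → ℝ) :=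
  {v | (∀ i, v i = 0 ∨ v i = 1 ∨ v i = -1) ∧ IsChain r {i | v i ≠ 0}}

theorem zero_mem_signedAntichainVectors : (0 : Fin n → ℝ) ∈ signedAntichainVectors r :=
  ⟨fun _ => Or.inl rfl, by simp [IsAntichainIn]⟩

theorem zero_mem_signedChainVectors : (0 : Fin n → ℝ) ∈ signedChainVectors r :=
  ⟨fun _ => Or.inl rfl, by simp⟩

theorem indicator_sign_eq_zero_or_one_or_neg_one (A : Set (Fin n)) (x : Fin n → ℝ) (i : Fin n) :
    A.indicator (fun j => (SignType.sign (x j) : ℝ)) i = 0 ∨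
      A.indicator (fun j => (SignType.sign (x j) : ℝ)) i = 1 ∨
      A.indicator (fun j => (SignType.sign (x j) : ℝ)) i = -1 := by
  by_cases hi : i ∈ A
  · rw [Set.indicator_of_mem hi]
    cases SignType.sign (x i) <;> simp
  · simp [hi]

theorem indicator_sign_mem_signedAntichainVectors {A : Set (Fin n)} (hA : IsAntichainIn r A)
    (x : Fin n → ℝ) : A.indicator (fun j => (SignType.sign (x j) : ℝ)) ∈ signedAntichainVectors r :=
  ⟨indicator_sign_eq_zero_or_one_or_neg_one A x, fun i hi j hj =>
    hA i (Set.support_indicator_subset hi) j (Set.support_indicator_subset hj)⟩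

theorem indicator_sign_mem_signedChainVectors {C : Set (Fin n)} (hC : IsChain r C)
    (x : Fin n → ℝ) : C.indicator (fun j => (SignType.sign (x j) : ℝ)) ∈ signedChainVectors r :=
  ⟨indicator_sign_eq_zero_or_one_or_neg_one C x, hC.mono Set.support_indicator_subset⟩

theorem sum_indicator_sign_mul (C : Finset (Fin n)) (x : Fin n → ℝ) :
    ∑ i, (C : Set (Fin n)).indicator (fun j => (SignType.sign (x j) : ℝ)) i * x i =
      ∑ i ∈ C, |x i| := by
  simp [Set.indicator_apply, sign_mul_self]

theorem signedChainVectors_finite : (signedChainVectors r).Finite :=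
  (Set.Finite.pi (t := fun _ => ({0, 1, -1} : Set ℝ)) fun _ => by simp).subset
    fun v hv i _ => hv.1 i

theorem abs_le_one_of_mem_signedChainVectors {v : Fin n → ℝ} (hv : v ∈ signedChainVectors r)
    (i : Fin n) : |v i| ≤ 1 := by
  rcases hv.1 i with h | h | h <;> simp [h]

theorem enrichedChainPolytope_subset_pi :
    enrichedChainPolytope r ⊆ Set.univ.pi fun _ => Set.Icc (-1 : ℝ) 1 :=
  convexHull_min (fun x hx i _ => by rcases hx.1 i with h | h | h <;> simp [h])
    (convex_pi fun _ _ => convex_Icc _ _)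

theorem eq_zero_of_mem_interior_enrichedChainPolytope {x : Fin n → ℝ}
    (hx : x ∈ interior (enrichedChainPolytope r)) (hxz : ∀ i, ∃ z : ℤ, x i = z) : x = 0 := by
  have hx' := interior_mono enrichedChainPolytope_subset_pi hx
  rw [interior_pi_set Set.finite_univ] at hx'
  funext i
  obtain ⟨z, hz⟩ := hxz i
  obtain ⟨h₁, h₂⟩ : (-1 : ℝ) < z ∧ (z : ℝ) < 1 := by simpa [hz] using hx' i (Set.mem_univ i)
  have : z = 0 := by
    have : -1 < z := by exact_mod_cast h₁
    have : z < 1 := by exact_mod_cast h₂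
    omega
  simp [hz, this]

/-- The supports of a signed chain vector and of a signed antichain vector meet in at most one
coordinate. -/
theorem signedChainVectors_subset_dualBody :
    signedChainVectors r ⊆ dualBody (signedAntichainVectors r) := by
  intro v hv x hx
  set T := univ.filter fun i => x i * v i ≠ 0
  have hT : #T ≤ 1 := card_le_one.2 fun a ha b hb => by
    by_contra hab
    simp only [T, mem_filter, mem_univ, true_and, mul_ne_zero_iff] at ha hb
    exact (hv.2 ha.2 hb.2 hab).elim (hx.2 a ha.1 b hb.1 hab).1 (hx.2 a ha.1 b hb.1 hab).2
  calc ∑ i, x i * v i = ∑ i ∈ T, x i * v i := (sum_filter_ne_zero _).symm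
    _ ≤ ∑ i ∈ T, 1 := sum_le_sum fun i _ => by
        rcases hx.1 i with h | h | h <;> rcases hv.1 i with h' | h' | h' <;> norm_num [h, h']
    _ ≤ 1 := by simpa using hT

theorem abs_sub_mul_sign {a t : ℝ} (ht : 0 ≤ t) (hta : t ≤ |a|) :
    |a - t * SignType.sign a| = |a| - t := by
  rcases lt_trichotomy a 0 with ha | rfl | ha
  · rw [abs_of_neg ha] at hta ⊢
    rw [sign_neg ha, SignType.coe_neg_one, abs_of_nonpos (by linarith)]
    ring
  · simp only [abs_zero] at hta ⊢
    simp [le_antisymm hta ht]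
  · rw [abs_of_pos ha] at hta ⊢
    rw [sign_pos ha, SignType.coe_one, abs_of_nonneg (by linarith)]
    ring

theorem sum_abs_le_sub_of_isChain_insert {x y : Fin n → ℝ} {A : Set (Fin n)} {c t : ℝ}
    (ht : 0 ≤ t) (hx : ∀ C : Finset (Fin n), IsChain r (C : Set (Fin n)) → ∑ i ∈ C, |x i| ≤ c)
    (hA : ∀ D : Finset (Fin n), IsChain r (D : Set (Fin n)) → (D : Set (Fin n)) ⊆ {i | x i ≠ 0} →
      ∃ a ∈ A, IsChain r (insert a (D : Set (Fin n))))
    (hy : ∀ i, |y i| = |x i| - A.indicator (fun _ => t) i) (hy0 : ∀ i, x i = 0 → y i = 0)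
    {C : Finset (Fin n)} (hC : IsChain r (C : Set (Fin n))) : ∑ i ∈ C, |y i| ≤ c - t := by
  classical
  set D := C.filter fun i => x i ≠ 0
  obtain ⟨a, haA, hchain⟩ := hA D (hC.mono (coe_subset.2 (filter_subset _ _)))
    fun i hi => (mem_filter.1 hi).2
  calc ∑ i ∈ C, |y i| = ∑ i ∈ D, |y i| := by
        refine (sum_filter_of_ne fun i _ hi => ?_).symm
        contrapose! hi
        simp [hy0 i hi]
    _ ≤ ∑ i ∈ insert a D, |y i| :=
        sum_le_sum_of_subset_of_nonneg (subset_insert _ _) fun _ _ _ => abs_nonneg _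
    _ = ∑ i ∈ insert a D, |x i| - ∑ i ∈ insert a D, A.indicator (fun _ => t) i := by
        simp only [hy, sum_sub_distrib]
    _ ≤ c - t := by
        refine sub_le_sub (hx _ (by rwa [coe_insert])) ?_
        simpa [haA] using single_le_sum (f := A.indicator fun _ => t)
          (fun i _ => Set.indicator_nonneg (fun _ _ => ht) i) (mem_insert_self a D)

variable [IsPartialOrder (Fin n) r]

/-- Subtract `t • s`, where `s` is the sign vector of `x` on the minimal elements `A` of its
support and `t` is the least `|x a|` on `A`. Every chain in the support extends by an element of
`A`, so all chain sums of `|x|` drop by at least `t`, while the support loses a point. -/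
theorem exists_peel_signedAntichainVector {x : Fin n → ℝ} {c : ℝ} (hx0 : x ≠ 0)
    (hx : ∀ C : Finset (Fin n), IsChain r (C : Set (Fin n)) → ∑ i ∈ C, |x i| ≤ c) :
    ∃ t, 0 ≤ t ∧ t ≤ c ∧ ∃ s ∈ signedAntichainVectors r,
      #{i | (x - t • s) i ≠ 0} < #{i | x i ≠ 0} ∧
      ∀ C : Finset (Fin n), IsChain r (C : Set (Fin n)) → ∑ i ∈ C, |(x - t • s) i| ≤ c - t := by
  classical
  set A := univ.filter fun a => x a ≠ 0 ∧ ∀ b, x b ≠ 0 → r b a → b = a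
  have hA : IsAntichainIn r A := fun a ha b hb hab => by
    simp only [A, coe_filter, mem_univ, true_and, Set.mem_ofPred_eq] at ha hb
    exact ⟨fun h => hab (hb.2 a ha.1 h), fun h => hab (ha.2 b hb.1 h).symm⟩
  have hAne : A.Nonempty := by
    obtain ⟨i, hi⟩ := Function.ne_iff.1 hx0
    obtain ⟨a, ha, -, hmin⟩ := exists_minimal_rel_of_mem (r := r) (S := {i | x i ≠ 0}) hi
    exact ⟨a, by simpa [A] using ⟨ha, hmin⟩⟩
  obtain ⟨a₀, ha₀, hta₀⟩ := exists_mem_eq_inf' hAne fun i => |x i|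
  set t := A.inf' hAne fun i => |x i|
  have ht0 : 0 ≤ t := hta₀ ▸ abs_nonneg _
  set s := (A : Set (Fin n)).indicator fun j => (SignType.sign (x j) : ℝ)
  have habs : ∀ i, |(x - t • s) i| = |x i| - (A : Set (Fin n)).indicator (fun _ => t) i := by
    intro i
    by_cases hi : i ∈ A
    · simpa [s, hi] using abs_sub_mul_sign ht0 (inf'_le _ hi)
    · simp [s, hi]
  have hy0 : ∀ i, x i = 0 → (x - t • s) i = 0 := fun i hi => by
    have : i ∉ A := by simp [A, hi]
    simp [s, this, hi]
  refine ⟨t, ht0, hta₀ ▸ by simpa using hx {a₀} (by simp), s,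
    indicator_sign_mem_signedAntichainVectors hA x, card_lt_card ?_, fun C hC => ?_⟩
  · refine (ssubset_iff_of_subset fun i => ?_).2 ⟨a₀, ?_, ?_⟩
    · simpa only [mem_filter, mem_univ, true_and, not_imp_not] using hy0 i
    · simpa using (mem_filter.1 ha₀).2.1
    · simp only [mem_filter, mem_univ, true_and, not_not]
      rw [← abs_eq_zero, habs, Set.indicator_of_mem (mem_coe.2 ha₀), hta₀, sub_self]
  · exact sum_abs_le_sub_of_isChain_insert ht0 hx (fun D hD hDx => by
      obtain ⟨a, haS, hamin, hchain⟩ := hD.exists_minimal_insert (S := {i | x i ≠ 0}) hDx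
        ⟨a₀, (mem_filter.1 ha₀).2.1⟩
      exact ⟨a, by simpa [A] using ⟨haS, hamin⟩, hchain⟩) habs hy0 hC

theorem mem_smul_enrichedChainPolytope {x : Fin n → ℝ} {c : ℝ}
    (hx : ∀ C : Finset (Fin n), IsChain r (C : Set (Fin n)) → ∑ i ∈ C, |x i| ≤ c) :
    x ∈ c • enrichedChainPolytope r := by
  induction hk : #{i | x i ≠ 0} using Nat.strong_induction_on generalizing x c with
  | _ k ih =>
  rcases eq_or_ne x 0 with rfl | hx0
  · exact Set.zero_mem_smul_set (subset_convexHull ℝ _ zero_mem_signedAntichainVectors)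
  obtain ⟨t, ht0, htc, s, hs, hcard, hchain⟩ := exists_peel_signedAntichainVector hx0 hx
  have hrest := ih _ (hk ▸ hcard) hchain rfl
  rw [show x = t • s + (x - t • s) by abel, show c = t + (c - t) by ring, enrichedChainPolytope,
    (convex_convexHull ℝ _).add_smul ht0 (sub_nonneg.2 htc)]
  exact Set.add_mem_add (Set.smul_mem_smul_set (subset_convexHull ℝ _ hs)) hrest

theorem enrichedChainPolytope_eq_dualBody :
    enrichedChainPolytope r = dualBody (signedChainVectors r) := by
  refine subset_antisymm ?_ fun x hx => ?_
  · rw [subset_dualBody_comm, enrichedChainPolytope, dualBody_convexHull]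
    exact signedChainVectors_subset_dualBody
  · simpa using mem_smul_enrichedChainPolytope (r := r) (c := 1) fun C hC => by
      simpa [sum_indicator_sign_mul] using hx _ (indicator_sign_mem_signedChainVectors hC x)

end EnrichedChainPolytope

/-- The enriched chain polytope is reflexive: it is full-dimensional, the origin is its
unique interior lattice point, and its dual polytope is again a lattice polytope
(it is the convex hull of its integer points). -/
theorem enrichedChainPolytope_reflexive {n : ℕ} (r : Fin n → Fin n → Prop)
    (hr : IsPartialOrder (Fin n) r) :
    affineSpan ℝ (enrichedChainPolytope r) = ⊤ ∧
    {x : Fin n → ℝ | x ∈ interior (enrichedChainPolytope r) ∧ ∀ i, ∃ z : ℤ, x i = z}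
      = {0} ∧
    dualBody (enrichedChainPolytope r)
      = convexHull ℝ
          {y : Fin n → ℝ | y ∈ dualBody (enrichedChainPolytope r) ∧ ∀ i, ∃ z : ℤ, y i = z} := by
  have h0 : (0 : Fin n → ℝ) ∈ interior (enrichedChainPolytope r) := by
    rw [enrichedChainPolytope_eq_dualBody]
    exact zero_mem_interior_dualBody fun v hv => abs_le_one_of_mem_signedChainVectors hv
  refine ⟨(convex_convexHull ℝ (signedAntichainVectors r)).interior_nonempty_iff_affineSpan_eq_top.1
      ⟨0, h0⟩,
    Set.eq_singleton_iff_unique_mem.2 ⟨⟨h0, fun _ => ⟨0, by simp⟩⟩,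
      fun x hx => eq_zero_of_mem_interior_enrichedChainPolytope hx.1 hx.2⟩,
    subset_antisymm ?_ (convexHull_min (fun y hy => hy.1) (convex_dualBody _))⟩
  have hV : signedChainVectors r ⊆
      {y | y ∈ dualBody (enrichedChainPolytope r) ∧ ∀ i, ∃ z : ℤ, y i = z} := fun v hv => by
    refine ⟨enrichedChainPolytope_eq_dualBody (r := r) ▸ subset_dualBody_dualBody _ hv, fun i => ?_⟩
    rcases hv.1 i with h | h | h
    exacts [⟨0, by simp [h]⟩, ⟨1, by simp [h]⟩, ⟨-1, by simp [h]⟩]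
  calc dualBody (enrichedChainPolytope r)
      = dualBody (dualBody (convexHull ℝ (signedChainVectors r))) := by
        rw [enrichedChainPolytope_eq_dualBody, dualBody_convexHull]
    _ ⊆ convexHull ℝ (signedChainVectors r) :=
        dualBody_dualBody_subset (convex_convexHull ℝ _)
          (signedChainVectors_finite.isClosed_convexHull ℝ)
          (subset_convexHull ℝ _ zero_mem_signedChainVectors)
    _ ⊆ _ := convexHull_mono hV
end

section
/- If f is a real polynomial of degree n with nonnegative coefficients that is palindromic (f(x) = x^n f(1/x)) and real-rooted, then f is γ-positive: there exist nonnegative reals γ_0,...,γ_{⌊n/2⌋} with f(x) = ∑_{i≥0} γ_i x^i (1+x)^{n−2i}. -/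
/-!
The polynomials `∑ γᵢ xⁱ (1 + x)ⁿ⁻²ⁱ` with `γᵢ ≥ 0` form the cone `Γₙ = gammaCone n` spanned by the
`xⁱ (1 + x)ⁿ⁻²ⁱ`, and these cones multiply: `Γₘ · Γₙ ⊆ Γₘ₊ₙ`. Nonnegative coefficients force
all roots of `f` to be negative, and palindromicity pairs each root `r` with `1 / r`. Hence `f`
is a nonnegative multiple of a product of factors `x + 1 ∈ Γ₁` and
`(x - r)(x - 1 / r) = (1 + x)² - ((r + 1)² / r) x ∈ Γ₂` with `r < 0`.
-/

def RealRooted (p : Polynomial ℝ) : Prop :=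
  ∀ z : ℂ, (p.map (algebraMap ℝ ℂ)).IsRoot z → z.im = 0

open Polynomial Finset
open scoped NNReal

theorem eval_pos_of_coeff_nonneg {R : Type*} [CommSemiring R] [PartialOrder R]
    [IsStrictOrderedRing R] {p : R[X]} (hcoeff : ∀ i, 0 ≤ p.coeff i) (h0 : 0 < p.coeff 0)
    {x : R} (hx : 0 ≤ x) : 0 < p.eval x := by
  rw [eval_eq_sum_range]
  calc 0 < p.coeff 0 * x ^ 0 := by simpa using h0
    _ ≤ _ := single_le_sum (fun i _ ↦ mul_nonneg (hcoeff i) (pow_nonneg hx i)) (by simp)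

theorem reverse_eq_self_of_coeff_eq {R : Type*} [Semiring R] {p : R[X]}
    (h : ∀ i ≤ p.natDegree, p.coeff i = p.coeff (p.natDegree - i)) : p.reverse = p := by
  ext i
  rw [coeff_reverse]
  by_cases hi : i ≤ p.natDegree
  · rw [revAt_le hi, ← h i hi]
  · rw [revAt_eq_self_of_lt (by omega)]

theorem reverse_X_sub_C {R : Type*} [Ring R] [Nontrivial R] (r : R) :
    (X - C r : R[X]).reverse = 1 - C r * X := by
  have hX : (X : R[X]).reverse = 1 := by rw [← mul_one X, reverse_X_mul, ← C_1, reverse_C]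
  simpa [hX, sub_eq_add_neg] using reverse_add_C (X : R[X]) (-r)

theorem reverse_X_sub_C_mul_X_sub_C_inv {K : Type*} [Field K] {r : K} (hr : r ≠ 0) :
    ((X - C r) * (X - C r⁻¹)).reverse = (X - C r) * (X - C r⁻¹) := by
  have hrr : C r * C r⁻¹ = (1 : K[X]) := by rw [← C_mul, mul_inv_cancel₀ hr, C_1]
  rw [reverse_mul_of_domain, reverse_X_sub_C, reverse_X_sub_C]
  linear_combination (X ^ 2 - 1) * hrr

theorem RealRooted.splits {p : ℝ[X]} (h : RealRooted p) : p.Splits :=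
  Splits.of_splits_map (algebraMap ℝ ℂ) (IsAlgClosed.splits _) fun z hz ↦
    ⟨z.re, Complex.ext (by simp) (by simp [h z (isRoot_of_mem_roots hz)])⟩

noncomputable def gammaCone (n : ℕ) : Submodule ℝ≥0 ℝ[X] :=
  Submodule.span ℝ≥0 ((fun i ↦ X ^ i * (1 + X) ^ (n - 2 * i)) '' ↑(range (n / 2 + 1)))

theorem gammaCone_mul_le (m n : ℕ) : gammaCone m * gammaCone n ≤ gammaCone (m + n) := by
  rw [gammaCone, gammaCone, Submodule.span_mul_span]
  refine Submodule.span_le.mpr ?_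
  rintro _ ⟨_, ⟨i, hi, rfl⟩, _, ⟨j, hj, rfl⟩, rfl⟩
  simp only [coe_range, Set.mem_Iio] at hi hj
  refine Submodule.subset_span ⟨i + j, by simp only [coe_range, Set.mem_Iio]; omega, ?_⟩
  have hexp : m + n - 2 * (i + j) = (m - 2 * i) + (n - 2 * j) := by omega
  simp only [hexp, pow_add]
  ring

theorem mul_mem_gammaCone {m n : ℕ} {p q : ℝ[X]} (hp : p ∈ gammaCone m)
    (hq : q ∈ gammaCone n) : p * q ∈ gammaCone (m + n) :=
  gammaCone_mul_le m n (Submodule.mul_mem_mul hp hq)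

theorem C_mem_gammaCone_zero {c : ℝ} (hc : 0 ≤ c) : C c ∈ gammaCone 0 := by
  have h1 : (1 : ℝ[X]) ∈ gammaCone 0 := Submodule.subset_span ⟨0, by simp, by simp⟩
  simpa [NNReal.smul_def, smul_eq_C_mul, hc] using Submodule.smul_mem _ c.toNNReal h1

theorem X_add_one_mem_gammaCone : X + 1 ∈ gammaCone 1 :=
  Submodule.subset_span ⟨0, by simp, by simp [add_comm]⟩

theorem one_add_X_sq_add_C_mul_X_mem_gammaCone {a : ℝ} (ha : 0 ≤ a) :
    (1 + X) ^ 2 + C a * X ∈ gammaCone 2 := by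
  have h0 : (1 + X) ^ 2 ∈ gammaCone 2 := Submodule.subset_span ⟨0, by simp, by simp⟩
  have h1 : (X : ℝ[X]) ∈ gammaCone 2 := Submodule.subset_span ⟨1, by simp, by simp⟩
  refine add_mem h0 ?_
  simpa [NNReal.smul_def, smul_eq_C_mul, ha] using Submodule.smul_mem _ a.toNNReal h1

theorem X_sub_C_mul_X_sub_C_inv_mem_gammaCone {r : ℝ} (hr : r < 0) :
    (X - C r) * (X - C r⁻¹) ∈ gammaCone 2 := by
  have hr0 := hr.ne
  have hrr : C r * C r⁻¹ = (1 : ℝ[X]) := by rw [← C_mul, mul_inv_cancel₀ hr0, C_1]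
  have hc : -(r + 1) ^ 2 / r = -r - r⁻¹ - 2 := by field_simp; ring
  have hq : (X - C r) * (X - C r⁻¹) = (1 + X) ^ 2 + C (-(r + 1) ^ 2 / r) * X := by
    rw [hc, map_sub, map_sub, map_neg, map_ofNat]
    linear_combination hrr
  rw [hq]
  exact one_add_X_sq_add_C_mul_X_mem_gammaCone
    (div_nonneg_of_nonpos (neg_nonpos.mpr (sq_nonneg _)) hr.le)

theorem exists_gamma_of_mem_gammaCone {n : ℕ} {f : ℝ[X]} (hf : f ∈ gammaCone n) :
    ∃ γ : ℕ → ℝ, (∀ i, 0 ≤ γ i) ∧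
      f = ∑ i ∈ range (n / 2 + 1), C (γ i) * X ^ i * (1 + X) ^ (n - 2 * i) := by
  obtain ⟨c, hc⟩ := (Submodule.mem_span_image_finset_iff_exists_fun' ℝ≥0).mp hf
  refine ⟨fun i ↦ c i, fun i ↦ (c i).2, ?_⟩
  simp only [← hc, NNReal.smul_def, smul_eq_C_mul, mul_assoc]

theorem exists_monic_palindromic_dvd_mem_gammaCone {f : ℝ[X]} {r : ℝ} (hpal : f.reverse = f)
    (hroot : f.IsRoot r) (hr : r < 0) :
    ∃ q : ℝ[X], q ∣ f ∧ q.Monic ∧ q.reverse = q ∧ 0 < q.natDegree ∧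
      q ∈ gammaCone q.natDegree := by
  obtain rfl | hr1 := eq_or_ne r (-1)
  · refine ⟨X - C (-1), dvd_iff_isRoot.mpr hroot, monic_X_sub_C _, ?_,
      by rw [natDegree_X_sub_C]; exact one_pos, ?_⟩
    · rw [reverse_X_sub_C]
      simp only [map_neg, map_one]
      ring
    · rw [natDegree_X_sub_C]
      simpa using X_add_one_mem_gammaCone
  have hr0 := hr.ne
  have hroot_inv : f.IsRoot r⁻¹ := by
    have := invertibleOfNonzero hr0
    simpa [hpal] using (eval₂_reverse_eq_zero_iff (RingHom.id ℝ) r f).mpr hroot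
  have hne : r ≠ r⁻¹ := by
    intro h
    have : r * r = 1 := by rw [mul_comm, ← mul_inv_cancel₀ hr0, ← h]
    exact hr1 (by nlinarith)
  have hdeg : ((X - C r) * (X - C r⁻¹)).natDegree = 2 := by
    rw [(monic_X_sub_C r).natDegree_mul (monic_X_sub_C _), natDegree_X_sub_C, natDegree_X_sub_C]
  refine ⟨(X - C r) * (X - C r⁻¹), ?_, (monic_X_sub_C r).mul (monic_X_sub_C _),
    reverse_X_sub_C_mul_X_sub_C_inv hr0, by omega,
    hdeg ▸ X_sub_C_mul_X_sub_C_inv_mem_gammaCone hr⟩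
  exact (isCoprime_X_sub_C_of_isUnit_sub (sub_ne_zero.mpr hne).isUnit).mul_dvd
    (dvd_iff_isRoot.mpr hroot) (dvd_iff_isRoot.mpr hroot_inv)

theorem mem_gammaCone_natDegree_of_splits {f : ℝ[X]} (hsplit : f.Splits)
    (hneg : ∀ x, f.IsRoot x → x < 0) (hpal : f.reverse = f) (hlc : 0 ≤ f.leadingCoeff) :
    f ∈ gammaCone f.natDegree := by
  induction hn : f.natDegree using Nat.strong_induction_on generalizing f with
  | _ n ih =>
  obtain rfl | hn0 := eq_or_ne n 0
  · rw [eq_C_of_natDegree_eq_zero hn]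
    exact C_mem_gammaCone_zero (by rwa [leadingCoeff, hn] at hlc)
  have hf0 : f ≠ 0 := by
    rintro rfl
    exact hn0 (by simpa using hn.symm)
  obtain ⟨r, hr⟩ := hsplit.exists_eval_eq_zero
    (by rw [degree_eq_natDegree hf0, hn]; exact_mod_cast hn0)
  obtain ⟨q, ⟨g, rfl⟩, hqm, hqpal, hqdeg, hqmem⟩ :=
    exists_monic_palindromic_dvd_mem_gammaCone hpal hr (hneg r hr)
  have hg0 : g ≠ 0 := right_ne_zero_of_mul hf0
  have hdeg : n = q.natDegree + g.natDegree := by rw [← hn, hqm.natDegree_mul' hg0]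
  have hgpal : g.reverse = g := by
    refine mul_left_cancel₀ hqm.ne_zero ?_
    calc q * g.reverse = q.reverse * g.reverse := by rw [hqpal]
      _ = q * g := by rw [← reverse_mul_of_domain, hpal]
  have hgneg : ∀ x, g.IsRoot x → x < 0 := fun x hx ↦ hneg x (by simp [hx.eq_zero])
  have hglc : 0 ≤ g.leadingCoeff := by rwa [leadingCoeff_mul, hqm.leadingCoeff, one_mul] at hlc
  rw [hdeg]
  exact mul_mem_gammaCone hqmem
    (ih _ (by omega) (hsplit.of_dvd hf0 (dvd_mul_left g q)) hgneg hgpal hglc rfl)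

/-- A palindromic, real-rooted real polynomial of degree `n` with nonnegative
coefficients is `γ`-positive. -/
theorem palindromic_realRooted_gamma_positive (n : ℕ) (f : Polynomial ℝ)
    (hf0 : f ≠ 0) (hdeg : f.natDegree = n)
    (hnonneg : ∀ i, 0 ≤ f.coeff i)
    (hpal : ∀ i ≤ n, f.coeff i = f.coeff (n - i))
    (hrr : RealRooted f) :
    ∃ γ : ℕ → ℝ, (∀ i, 0 ≤ γ i) ∧
      f = ∑ i ∈ Finset.range (n / 2 + 1),
            Polynomial.C (γ i) * Polynomial.X ^ i * (1 + Polynomial.X) ^ (n - 2 * i) := by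
  subst hdeg
  have hlc : 0 ≤ f.leadingCoeff := hnonneg _
  have hcoeff0 : 0 < f.coeff 0 := by
    rw [hpal 0 (Nat.zero_le _), Nat.sub_zero]
    exact hlc.lt_of_ne' (leadingCoeff_ne_zero.mpr hf0)
  have hneg : ∀ x, f.IsRoot x → x < 0 := fun x hx ↦
    not_le.mp fun h ↦ (eval_pos_of_coeff_nonneg hnonneg hcoeff0 h).ne' hx
  exact exists_gamma_of_mem_gammaCone
    (mem_gammaCone_natDegree_of_splits hrr.splits hneg (reverse_eq_self_of_coeff_eq hpal) hlc)
end

section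
/- Let P be a finite poset on [n] that is narrow, i.e., its elements can be partitioned into two chains, and naturally labeled. Then the left peak polynomial of P equals the P-Eulerian polynomial: W_P^{(ℓ)}(x) = ∑_{π ∈ L(P)} x^{des(π)}, where des(π) is the number of descents of the linear extension π. -/
/-- `w` is a linear extension of the poset `(Fin n, r)`. -/
def IsLinExt {n : ℕ} (r : Fin n → Fin n → Prop) (w : Equiv.Perm (Fin n)) : Prop :=
  ∀ i j : Fin n, r (w i) (w j) → i ≤ j

/-- The word `0, w 1, …, w n` (1-based values, with the sentinel `π_0 = 0`). -/
def extVal {n : ℕ} (w : Equiv.Perm (Fin n)) (i : ℕ) : ℕ :=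
  if h : 1 ≤ i ∧ i ≤ n then ((w ⟨i - 1, by omega⟩ : Fin n) : ℕ) + 1 else 0

/-- The number of left peaks of the linear extension `w`: indices `1 ≤ i ≤ n-1`
with `π_{i-1} < π_i > π_{i+1}`, where `π_0 = 0`. -/
def pkl {n : ℕ} (w : Equiv.Perm (Fin n)) : ℕ :=
  ((Finset.Ico 1 n).filter
    (fun i => extVal w (i - 1) < extVal w i ∧ extVal w (i + 1) < extVal w i)).card

/-- The number of descents of `w`: indices `1 ≤ i ≤ n-1` with `π_i > π_{i+1}`. -/
def des {n : ℕ} (w : Equiv.Perm (Fin n)) : ℕ :=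
  ((Finset.Ico 1 n).filter (fun i => extVal w (i + 1) < extVal w i)).card

lemma extVal_of_le {n : ℕ} (w : Equiv.Perm (Fin n)) (i : ℕ) (h1 : 1 ≤ i) (h2 : i ≤ n) :
    extVal w i = ((w ⟨i - 1, by omega⟩ : Fin n) : ℕ) + 1 := by
  unfold extVal
  rw [dif_pos ⟨h1, h2⟩]

set_option maxHeartbeats 1600000 in
open scoped Classical in
/-- For a narrow, naturally labeled poset `P`, the left peak polynomial equals
the `P`-Eulerian polynomial: `W_P^{(ℓ)}(x) = ∑_{π ∈ L(P)} x^{des(π)}`. -/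
theorem narrow_left_peak_eq_eulerian {n : ℕ} (r : Fin n → Fin n → Prop)
    (hr : IsPartialOrder (Fin n) r) (hnat : ∀ i j, r i j → i ≤ j)
    (hnarrow : ∃ C₁ C₂ : Set (Fin n), IsChain r C₁ ∧ IsChain r C₂ ∧ C₁ ∪ C₂ = Set.univ) :
    (∑ w ∈ Finset.univ.filter (fun w : Equiv.Perm (Fin n) => IsLinExt r w),
        (Polynomial.X : Polynomial ℤ) ^ (pkl w))
      = ∑ w ∈ Finset.univ.filter (fun w : Equiv.Perm (Fin n) => IsLinExt r w),
        (Polynomial.X : Polynomial ℤ) ^ (des w) := by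
  obtain ⟨C₁, C₂, h₁, h₂, hcov⟩ := hnarrow
  have hmem : ∀ x : Fin n, x ∈ C₁ ∨ x ∈ C₂ := by
    intro x
    have : x ∈ C₁ ∪ C₂ := by rw [hcov]; exact Set.mem_univ x
    exact this
  apply Finset.sum_congr rfl
  intro w hw
  rw [Finset.mem_filter] at hw
  have hlin : IsLinExt r w := hw.2
  -- two elements of a common chain appearing in increasing positions have increasing values
  have hsame : ∀ p q : Fin n, p < q →
      ((w p ∈ C₁ ∧ w q ∈ C₁) ∨ (w p ∈ C₂ ∧ w q ∈ C₂)) → ((w p : Fin n) : ℕ) < (w q : ℕ) := by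
    intro p q hpq hC
    have hne : w p ≠ w q := fun h => absurd (w.injective h) (Fin.ne_of_lt hpq)
    have hror : r (w p) (w q) ∨ r (w q) (w p) := by
      rcases hC with ⟨hp, hq⟩ | ⟨hp, hq⟩
      · exact h₁ hp hq hne
      · exact h₂ hp hq hne
    rcases hror with h | h
    · have := hnat _ _ h
      exact lt_of_le_of_ne (by exact_mod_cast this) (fun he => hne (Fin.ext he))
    · have := hlin _ _ h
      exact absurd hpq (not_lt.mpr this)
  -- no double descents
  have hnd : ∀ a b c : Fin n, a < b → b < c →
      ¬(((w c : Fin n) : ℕ) < (w b : ℕ) ∧ ((w b : Fin n) : ℕ) < (w a : ℕ)) := by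
    intro a b c hab hbc ⟨hcb, hba⟩
    rcases hmem (w a) with ha | ha <;> rcases hmem (w b) with hb | hb <;>
      rcases hmem (w c) with hc | hc
    · exact absurd (hsame a b hab (Or.inl ⟨ha, hb⟩)) (by omega)
    · exact absurd (hsame a b hab (Or.inl ⟨ha, hb⟩)) (by omega)
    · exact absurd (hsame a c (hab.trans hbc) (Or.inl ⟨ha, hc⟩)) (by omega)
    · exact absurd (hsame b c hbc (Or.inr ⟨hb, hc⟩)) (by omega)
    · exact absurd (hsame b c hbc (Or.inl ⟨hb, hc⟩)) (by omega)
    · exact absurd (hsame a c (hab.trans hbc) (Or.inr ⟨ha, hc⟩)) (by omega)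
    · exact absurd (hsame a b hab (Or.inr ⟨ha, hb⟩)) (by omega)
    · exact absurd (hsame a b hab (Or.inr ⟨ha, hb⟩)) (by omega)
  -- pointwise equality pkl w = des w
  have key : pkl w = des w := by
    unfold pkl des
    congr 1
    apply Finset.filter_congr
    intro i hi
    rw [Finset.mem_Ico] at hi
    obtain ⟨hi1, hin⟩ := hi
    constructor
    · exact fun h => h.2
    · intro hdes
      refine ⟨?_, hdes⟩
      rcases Nat.lt_or_ge i 2 with hlt | hge
      · -- i = 1 : extVal w 0 = 0 < extVal w 1
        have : i = 1 := by omega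
        subst this
        have h0 : extVal w 0 = 0 := by unfold extVal; rw [dif_neg (by omega)]
        rw [h0, extVal_of_le w 1 (by omega) (by omega)]
        omega
      · -- i ≥ 2 : use no-double-descent
        have hv1 : extVal w (i - 1) = ((w ⟨i - 1 - 1, by omega⟩ : Fin n) : ℕ) + 1 :=
          extVal_of_le w (i - 1) (by omega) (by omega)
        have hv2 : extVal w i = ((w ⟨i - 1, by omega⟩ : Fin n) : ℕ) + 1 :=
          extVal_of_le w i (by omega) (by omega)
        have hv3 : extVal w (i + 1) = ((w ⟨i + 1 - 1, by omega⟩ : Fin n) : ℕ) + 1 :=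
          extVal_of_le w (i + 1) (by omega) (by omega)
        rw [hv1, hv2]
        rw [hv2, hv3] at hdes
        by_contra hcon
        have hab : (⟨i - 1 - 1, by omega⟩ : Fin n) < ⟨i - 1, by omega⟩ :=
          Fin.mk_lt_mk.mpr (by omega)
        have hbc : (⟨i - 1, by omega⟩ : Fin n) < ⟨i + 1 - 1, by omega⟩ :=
          Fin.mk_lt_mk.mpr (by omega)
        have hne : w (⟨i - 1 - 1, by omega⟩ : Fin n) ≠ w ⟨i - 1, by omega⟩ :=
          fun h => absurd (w.injective h) (Fin.ne_of_lt hab)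
        have hneval : ((w (⟨i - 1 - 1, by omega⟩ : Fin n)) : ℕ) ≠ (w ⟨i - 1, by omega⟩ : ℕ) :=
          fun h => hne (Fin.ext h)
        exact hnd _ _ _ hab hbc ⟨by omega, by omega⟩
  rw [key]
end
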